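/- arXiv:1604.00985 — 4 statements merged into one kernel-verified Lean document; each statement's English description precedes it below -/
import Mathlib

section
/- Let C > 0 be a real constant and let f : ℝ → ℝ be a differentiable function satisfying f'(t) = f(t)² − C for every t ∈ ℝ. Then f(t)² ≤ C for all t ∈ ℝ. -/
/-!
Suppose `a = f t₀ > 0` and `a² > C`. Since `f' = a² - C > 0` wherever `f = a`, the solution
never drops below `a` after `t₀`, so there `f' = f² - C ≥ k f²` with `k = 1 - C / a² > 0`.
Then `1 / f` decreases at rate at least `k` and would reach `0` in finite time, which is absurd.
The case `f t₀ < 0` reduces to this one because `s ↦ -f (-s)` solves the same equation.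
-/

open Set

theorem le_of_forall_eq_imp_deriv_pos {f f' : ℝ → ℝ} {a t₀ : ℝ}
    (hf : ∀ t, HasDerivAt f (f' t) t) (h₀ : a ≤ f t₀) (hlevel : ∀ t, f t = a → 0 < f' t) :
    ∀ t, t₀ ≤ t → a ≤ f t := by
  intro t ht
  have hfence := image_le_of_deriv_right_lt_deriv_boundary' (a := t₀) (b := t)
    (f := fun s => -f s) (f' := fun s => -f' s) (B := fun _ => -a) (B' := fun _ => 0)
    (fun s _ => (hf s).continuousAt.neg.continuousWithinAt)
    (fun s _ => (hf s).neg.hasDerivWithinAt) (neg_le_neg h₀) continuousOn_const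
    (fun _ _ => hasDerivWithinAt_const _ _ _)
    (fun s _ hs => neg_neg_iff_pos.mpr (hlevel s (neg_inj.mp hs)))
    ⟨ht, le_rfl⟩
  exact neg_le_neg_iff.mp hfence

theorem exists_nonpos_of_mul_sq_le_deriv {f f' : ℝ → ℝ} {k t₀ : ℝ} (hk : 0 < k)
    (hf : ∀ t, HasDerivAt f (f' t) t) (hineq : ∀ t, t₀ ≤ t → 0 < f t → k * f t ^ 2 ≤ f' t) :
    ∃ t, t₀ ≤ t ∧ f t ≤ 0 := by
  by_contra! hpos
  have hanti : AntitoneOn (fun t => (f t)⁻¹ + t * k) (Ici t₀) := by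
    refine antitoneOn_of_hasDerivWithinAt_nonpos (f' := fun t => -f' t / f t ^ 2 + k)
      (convex_Ici t₀) (fun t ht => ?_) (fun t ht => ?_) (fun t ht => ?_)
    · exact (((hf t).continuousAt.inv₀ (hpos t ht).ne').add
        (continuousAt_id.mul continuousAt_const)).continuousWithinAt
    · rw [interior_Ici] at ht
      exact (((hf t).inv (hpos t ht.le).ne').add (hasDerivAt_mul_const k)).hasDerivWithinAt
    · rw [interior_Ici] at ht
      have hft := hpos t ht.le
      have : k ≤ f' t / f t ^ 2 := (le_div_iff₀ (by positivity)).mpr (hineq t ht.le hft)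
      simp only [neg_div]
      linarith
  set T := t₀ + (f t₀)⁻¹ / k
  have hT : t₀ ≤ T := le_add_of_nonneg_right (div_nonneg (inv_pos.mpr (hpos t₀ le_rfl)).le hk.le)
  have hle : (f T)⁻¹ + T * k ≤ (f t₀)⁻¹ + t₀ * k := hanti self_mem_Ici hT hT
  have hTk : T * k = t₀ * k + (f t₀)⁻¹ := by simp only [T]; field_simp
  have := inv_pos.mpr (hpos T hT)
  linarith

theorem sq_le_of_hasDerivAt_sq_sub_of_pos {f : ℝ → ℝ} {C t₀ : ℝ}
    (hC : 0 ≤ C) (hf : ∀ t, HasDerivAt f (f t ^ 2 - C) t) (h₀ : 0 < f t₀) : f t₀ ^ 2 ≤ C := by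
  by_contra! hgt
  set a := f t₀
  have hinv : ∀ t, t₀ ≤ t → a ≤ f t :=
    le_of_forall_eq_imp_deriv_pos hf le_rfl fun t ht => by rw [ht]; linarith
  have ha2 : 0 < a ^ 2 := by positivity
  obtain ⟨t, ht, hft⟩ := exists_nonpos_of_mul_sq_le_deriv (k := 1 - C / a ^ 2)
    (by rw [sub_pos, div_lt_one ha2]; exact hgt) hf fun t ht _ => by
      have hsq : a ^ 2 ≤ f t ^ 2 := pow_le_pow_left₀ h₀.le (hinv t ht) 2
      have : C ≤ C / a ^ 2 * f t ^ 2 := by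
        rw [div_mul_eq_mul_div, le_div_iff₀ ha2]
        exact mul_le_mul_of_nonneg_left hsq hC
      linarith
  linarith [hinv t ht]

/-- If `C > 0` and a differentiable function `f : ℝ → ℝ` satisfies the Riccati
equation `f' = f² - C` on all of `ℝ`, then `f` is bounded: `f(t)² ≤ C` for all `t`. -/
theorem riccati_global_bounded (C : ℝ) (hC : 0 < C) (f : ℝ → ℝ)
    (hf : Differentiable ℝ f)
    (hode : ∀ t : ℝ, deriv f t = f t ^ 2 - C) :
    ∀ t : ℝ, f t ^ 2 ≤ C := by
  have hderiv : ∀ t, HasDerivAt f (f t ^ 2 - C) t := fun t => hode t ▸ (hf t).hasDerivAt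
  have hreflect : ∀ s, HasDerivAt (fun s => -f (-s)) ((-f (-s)) ^ 2 - C) s := fun s => by
    have h := ((hderiv (-s)).scomp s (hasDerivAt_neg s)).neg
    rw [neg_sq]
    simp only [neg_smul, one_smul, neg_neg] at h
    exact h
  intro t
  rcases lt_trichotomy (f t) 0 with hneg | hzero | hpos
  · simpa using sq_le_of_hasDerivAt_sq_sub_of_pos hC.le hreflect (t₀ := -t) (by simpa using hneg)
  · simp [hzero, hC.le]
  · exact sq_le_of_hasDerivAt_sq_sub_of_pos hC.le hderiv hpos
end

section
/- Let C > 0. A differentiable function f : ℝ → ℝ satisfies f'(t) = f(t)² − C for every t ∈ ℝ if and only if there exists f₀ ∈ [−√C, √C] such that for all t ∈ ℝ, f(t) = √C · (1 − 2(√C − f₀) / ((√C + f₀)·exp(−2t√C) + (√C − f₀))); in this case necessarily f₀ = f(0). (For every f₀ ∈ [−√C, √C] and every t ∈ ℝ the denominator (√C + f₀)·exp(−2t√C) + (√C − f₀) is strictly positive, so the formula is well defined.) -/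
/-!
Write `s = √C`. With the integrating factor `u = exp (-∫₀ᵗ f)`, both `(s - f) u e^{-st}` and
`(s + f) u e^{st}` are constant along a solution of `f' = f² - s²`, so
`2 s u(t) = (s - f₀) e^{st} + (s + f₀) e^{-st}` with `f₀ = f 0`. Since `u > 0`, this is positive for
every `t`, which forces `|f₀| ≤ s`; taking the quotient of the two identities gives the formula.
Conversely, the formula is checked to solve the equation by differentiating it.
-/

open Real Set

noncomputable def riccatiSol (s a t : ℝ) : ℝ :=
  s * (1 - 2 * (s - a) / ((s + a) * exp (-2 * t * s) + (s - a)))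

lemma add_mul_exp_add_sub_pos {s a : ℝ} (hs : 0 < s) (ha : a ∈ Icc (-s) s) (x : ℝ) :
    0 < (s + a) * exp x + (s - a) := by
  obtain ⟨ha₁, ha₂⟩ := ha
  rcases ha₂.lt_or_eq with ha₂ | rfl
  · have := mul_nonneg (neg_le_iff_add_nonneg.mp ha₁) (exp_pos x).le
    linarith
  · have := mul_pos (add_pos hs hs) (exp_pos x)
    linarith

lemma riccatiSol_zero {s : ℝ} (hs : s ≠ 0) (a : ℝ) : riccatiSol s a 0 = a := by
  rw [riccatiSol, mul_zero, zero_mul, exp_zero, mul_one,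
    show s + a + (s - a) = 2 * s by ring]
  field_simp
  ring

lemma hasDerivAt_riccatiSol {s a : ℝ} (hs : 0 < s) (ha : a ∈ Icc (-s) s) (t : ℝ) :
    HasDerivAt (riccatiSol s a) (riccatiSol s a t ^ 2 - s ^ 2) t := by
  have hD := add_mul_exp_add_sub_pos hs ha (-2 * t * s)
  have hexp : HasDerivAt (fun t => exp (-2 * t * s)) (exp (-2 * t * s) * (-2 * s)) t := by
    simpa [mul_comm, mul_assoc, mul_left_comm] using
      ((hasDerivAt_id t).const_mul (-2 * s)).exp
  refine ((((hasDerivAt_const t (2 * (s - a))).fun_div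
    ((hexp.const_mul (s + a)).add_const (s - a)) hD.ne').const_sub 1).const_mul s).congr_deriv ?_
  rw [riccatiSol]
  generalize exp (-2 * t * s) = X at hD ⊢
  field_simp
  ring

lemma exists_integrating_factor {f : ℝ → ℝ} (hf : Continuous f) :
    ∃ u : ℝ → ℝ, u 0 = 1 ∧ (∀ t, 0 < u t) ∧ ∀ t, HasDerivAt u (-f t * u t) t :=
  ⟨fun t => exp (-∫ x in (0 : ℝ)..t, f x), by simp, fun t => exp_pos _, fun t => by
    simpa [mul_comm] using (hf.integral_hasStrictDerivAt 0 t).hasDerivAt.neg.exp⟩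

lemma riccati_first_integral {s : ℝ} {f u : ℝ → ℝ}
    (hf : ∀ t, HasDerivAt f (f t ^ 2 - s ^ 2) t) (hu : ∀ t, HasDerivAt u (-f t * u t) t)
    (t : ℝ) : (s - f t) * u t = (s - f 0) * u 0 * exp (s * t) := by
  have hconst : ∀ t, HasDerivAt (fun t => (s - f t) * u t * exp (-(s * t))) 0 t := fun t => by
    have hexp : HasDerivAt (fun t => exp (-(s * t))) (exp (-(s * t)) * -s) t := by
      simpa using ((hasDerivAt_id t).const_mul s).neg.exp
    exact ((((hf t).const_sub s).fun_mul (hu t)).fun_mul hexp).congr_deriv (by ring)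
  have h := is_const_of_deriv_eq_zero (fun t => (hconst t).differentiableAt)
    (fun t => (hconst t).deriv) t 0
  simp only [mul_zero, neg_zero, exp_zero, mul_one] at h
  rw [← h, mul_assoc, ← exp_add, neg_add_cancel, exp_zero, mul_one]

lemma nonneg_of_forall_pos_mul_add_pos {p q : ℝ} (h : ∀ x > 0, 0 < p * x + q) :
    0 ≤ p ∧ 0 ≤ q := by
  constructor
  · by_contra! hp
    have hx : p * ((|q| + 1) / -p) = -(|q| + 1) := by field_simp [hp.ne]
    have := h ((|q| + 1) / -p) (div_pos (by positivity) (neg_pos.mpr hp))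
    linarith [le_abs_self q]
  · by_contra! hq
    have hx_pos : 0 < -q / (|p| + 1) := div_pos (neg_pos.mpr hq) (by positivity)
    have hx : (|p| + 1) * (-q / (|p| + 1)) = -q := mul_div_cancel₀ _ (by positivity)
    nlinarith [h _ hx_pos, mul_le_mul_of_nonneg_right (le_abs_self p) hx_pos.le]

lemma mem_Icc_of_forall_exp_pos {s a : ℝ} (hs : 0 < s)
    (h : ∀ t, 0 < (s - a) * exp (s * t) + (s + a) * exp (-(s * t))) : a ∈ Icc (-s) s := by
  suffices 0 ≤ s - a ∧ 0 ≤ s + a from ⟨by linarith [this.2], by linarith [this.1]⟩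
  refine nonneg_of_forall_pos_mul_add_pos fun x hx => ?_
  set E := exp (s * (log x / (2 * s)))
  have hE : E ^ 2 = x := by
    rw [← exp_nat_mul, show ((2 : ℕ) : ℝ) * (s * (log x / (2 * s))) = log x by field_simp; ring,
      exp_log hx]
  have hEE : E * exp (-(s * (log x / (2 * s)))) = 1 := by rw [← exp_add, add_neg_cancel, exp_zero]
  have := mul_pos (h (log x / (2 * s))) (exp_pos (s * (log x / (2 * s))))
  linear_combination this + (s - a) * hE + (s + a) * hEE

theorem eq_riccatiSol_of_hasDerivAt {s : ℝ} (hs : 0 < s) {f : ℝ → ℝ}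
    (hf : ∀ t, HasDerivAt f (f t ^ 2 - s ^ 2) t) :
    f 0 ∈ Icc (-s) s ∧ ∀ t, f t = riccatiSol s (f 0) t := by
  obtain ⟨u, hu0, hu_pos, hu⟩ :=
    exists_integrating_factor (continuous_iff_continuousAt.mpr fun t => (hf t).continuousAt)
  have hminus := riccati_first_integral hf hu
  have hplus := riccati_first_integral (s := -s) (by simpa only [neg_sq] using hf) hu
  simp only [hu0, mul_one, neg_mul] at hminus hplus
  have hsum : ∀ t, 2 * s * u t = (s - f 0) * exp (s * t) + (s + f 0) * exp (-(s * t)) := by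
    intro t; linear_combination hminus t - hplus t
  have ha := mem_Icc_of_forall_exp_pos hs fun t => hsum t ▸ mul_pos (by positivity) (hu_pos t)
  refine ⟨ha, fun t => ?_⟩
  have hD := add_mul_exp_add_sub_pos hs ha (-2 * t * s)
  have hX : exp (-2 * t * s) = exp (-(s * t)) ^ 2 := by rw [← exp_nat_mul]; congr 1; push_cast; ring
  have hEE : exp (s * t) * exp (-(s * t)) = 1 := by rw [← exp_add, add_neg_cancel, exp_zero]
  rw [riccatiSol, one_sub_div hD.ne', mul_div_assoc', eq_div_iff hD.ne']
  linear_combination (f t - s) * (s + f 0) * hX + (f t - s) * exp (-(s * t)) * hplus t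
    - (f t + s) * exp (-(s * t)) * hminus t - (f t + s) * (s - f 0) * hEE

open Real in
/-- Explicit form of all global solutions of the Riccati equation `f' = f² - C`, `C > 0`:
`f` solves the ODE iff it is given by the explicit formula for some `f₀ ∈ [-√C, √C]`
(in which case necessarily `f₀ = f 0`); the denominator in the formula is always positive. -/
theorem riccati_global_solutions (C : ℝ) (hC : 0 < C) (f : ℝ → ℝ)
    (hf : Differentiable ℝ f) :
    ((∀ t : ℝ, deriv f t = f t ^ 2 - C) ↔
      ∃ f₀ ∈ Set.Icc (-Real.sqrt C) (Real.sqrt C), ∀ t : ℝ,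
        f t = Real.sqrt C * (1 - 2 * (Real.sqrt C - f₀) /
          ((Real.sqrt C + f₀) * Real.exp (-2 * t * Real.sqrt C) + (Real.sqrt C - f₀)))) ∧
    (∀ f₀ ∈ Set.Icc (-Real.sqrt C) (Real.sqrt C),
      (∀ t : ℝ, f t = Real.sqrt C * (1 - 2 * (Real.sqrt C - f₀) /
          ((Real.sqrt C + f₀) * Real.exp (-2 * t * Real.sqrt C) + (Real.sqrt C - f₀)))) →
      f₀ = f 0) ∧
    (∀ f₀ ∈ Set.Icc (-Real.sqrt C) (Real.sqrt C), ∀ t : ℝ,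
      0 < (Real.sqrt C + f₀) * Real.exp (-2 * t * Real.sqrt C) + (Real.sqrt C - f₀)) := by
  have hs : 0 < √C := sqrt_pos.mpr hC
  refine ⟨⟨fun hode => ?_, fun ⟨f₀, hf₀, hform⟩ t => ?_⟩,
    fun f₀ _ hform => ?_, fun f₀ hf₀ t => add_mul_exp_add_sub_pos hs hf₀ _⟩
  · refine ⟨f 0, eq_riccatiSol_of_hasDerivAt hs fun t => ?_⟩
    rw [sq_sqrt hC.le, ← hode t]
    exact (hf t).hasDerivAt
  · have hfeq : f = riccatiSol √C f₀ := funext hform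
    rw [hfeq, (hasDerivAt_riccatiSol hs hf₀ t).deriv, sq_sqrt hC.le]
  · exact (hform 0).trans (riccatiSol_zero hs.ne' f₀) |>.symm
end

section
/- Let V and W be finite-dimensional real inner product spaces, let (e₁, …, eₙ) be an orthonormal basis of V, let h : V × V → W be a symmetric bilinear map, and set H = Σₐ h(eₐ, eₐ). Then the following are equivalent: (1) for every symmetric bilinear form B on W, B(H, H) = Σ_{a,b} B(h(eₐ, e_b), h(eₐ, e_b)); (2) either h = 0, or all three of the following hold: H ≠ 0, ⟨H, H⟩ = Σ_{a,b} ⟨h(eₐ, e_b), h(eₐ, e_b)⟩, and for all a, b there exists c ∈ ℝ with h(eₐ, e_b) = c·H. -/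
/-!
Testing the identity on `B = ⟪·, u⟫ ⟪·, u⟫` gives `⟪H, u⟫² = ∑ ⟪h(eₐ, e_b), u⟫²`, so every vector
orthogonal to `H` is orthogonal to all `h(eₐ, e_b)`, i.e. `h(eₐ, e_b) ∈ (ℝ ∙ H)ᗮᗮ = ℝ ∙ H`; testing it
on the inner product gives the norm identity. Conversely, if `h(eₐ, e_b) = c_ab • H` with `H ≠ 0`,
the norm identity forces `∑ c_ab² = 1`, and then `∑ B(h(eₐ, e_b), h(eₐ, e_b)) = ∑ c_ab² B(H, H)`.
-/

open Finset RealInnerProductSpace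

section

variable {W : Type*} [NormedAddCommGroup W] [InnerProductSpace ℝ W] {ι : Type*} [Fintype ι]

theorem sq_inner_eq_sum_sq_inner {H : W} {v : ι → W}
    (hB : ∀ B : W →ₗ[ℝ] W →ₗ[ℝ] ℝ, (∀ x y : W, B x y = B y x) →
      B H H = ∑ i, B (v i) (v i)) (u : W) :
    ⟪H, u⟫ ^ 2 = ∑ i, ⟪v i, u⟫ ^ 2 := by
  have := hB (LinearMap.BilinForm.linMulLin (innerₗ W u) (innerₗ W u))
    fun x y => mul_comm _ _
  simpa [sq, real_inner_comm u] using this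

theorem exists_eq_smul_of_sq_inner_eq_sum {H : W} {v : ι → W}
    (hv : ∀ u : W, ⟪H, u⟫ ^ 2 = ∑ i, ⟪v i, u⟫ ^ 2) (i : ι) :
    ∃ c : ℝ, v i = c • H := by
  have hperp : v i ∈ (ℝ ∙ H)ᗮᗮ := by
    intro u hu
    rw [Submodule.mem_orthogonal_singleton_iff_inner_right] at hu
    have hsum : ∑ j, ⟪v j, u⟫ ^ 2 = 0 := by rw [← hv u, hu, sq, zero_mul]
    rw [sum_eq_zero_iff_of_nonneg fun j _ => sq_nonneg _] at hsum
    rw [real_inner_comm]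
    exact pow_eq_zero_iff two_ne_zero |>.mp (hsum i (mem_univ i))
  obtain ⟨c, hc⟩ := Submodule.mem_span_singleton.mp ((ℝ ∙ H).orthogonal_orthogonal ▸ hperp)
  exact ⟨c, hc.symm⟩

theorem forall_bilin_eq_sum_of_eq_smul {H : W} {v : ι → W} (hH : H ≠ 0)
    (hnorm : ⟪H, H⟫ = ∑ i, ⟪v i, v i⟫) (c : ι → ℝ) (hc : ∀ i, v i = c i • H)
    (B : W →ₗ[ℝ] W →ₗ[ℝ] ℝ) : B H H = ∑ i, B (v i) (v i) := by
  have hc_sq : ∑ i, c i ^ 2 = 1 := by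
    refine mul_right_cancel₀ (inner_self_ne_zero.mpr hH) ?_
    calc (∑ i, c i ^ 2) * ⟪H, H⟫ = ∑ i, ⟪v i, v i⟫ := by
          simp_rw [sum_mul, hc, real_inner_smul_left, real_inner_smul_right, sq, mul_assoc]
      _ = 1 * ⟪H, H⟫ := by rw [one_mul, hnorm]
  simp_rw [hc, map_smul, LinearMap.smul_apply, smul_eq_mul, ← mul_assoc, ← sq, ← sum_mul, hc_sq,
    one_mul]

theorem forall_symm_bilin_eq_sum_iff (H : W) (v : ι → W) :
    (∀ B : W →ₗ[ℝ] W →ₗ[ℝ] ℝ, (∀ x y : W, B x y = B y x) → B H H = ∑ i, B (v i) (v i)) ↔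
      ((∀ i, v i = 0) ∧ H = 0) ∨
        (H ≠ 0 ∧ ⟪H, H⟫ = ∑ i, ⟪v i, v i⟫ ∧ ∀ i, ∃ c : ℝ, v i = c • H) := by
  constructor
  · intro hB
    have hspan := exists_eq_smul_of_sq_inner_eq_sum (sq_inner_eq_sum_sq_inner hB)
    by_cases hH : H = 0
    · refine .inl ⟨fun i => ?_, hH⟩
      obtain ⟨c, hc⟩ := hspan i
      rw [hc, hH, smul_zero]
    · exact .inr ⟨hH, hB (innerₗ W) fun x y => real_inner_comm y x, hspan⟩
  · rintro (⟨hv, hH⟩ | ⟨hH, hnorm, hspan⟩) B -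
    · simp [hv, hH]
    · choose c hc using hspan
      exact forall_bilin_eq_sum_of_eq_smul hH hnorm c hc B

end

theorem Phi_h_eq_zero_iff_general
    {V W : Type*} [NormedAddCommGroup V] [InnerProductSpace ℝ V]
    [NormedAddCommGroup W] [InnerProductSpace ℝ W]
    {n : ℕ} (e : OrthonormalBasis (Fin n) ℝ V)
    (h : V →ₗ[ℝ] V →ₗ[ℝ] W)
    (H : W) (hH : H = ∑ a : Fin n, h (e a) (e a)) :
    (∀ B : W →ₗ[ℝ] W →ₗ[ℝ] ℝ, (∀ x y : W, B x y = B y x) →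
        B H H = ∑ a : Fin n, ∑ b : Fin n, B (h (e a) (e b)) (h (e a) (e b))) ↔
      (h = 0 ∨
        (H ≠ 0 ∧
          (inner ℝ H H : ℝ) = ∑ a : Fin n, ∑ b : Fin n,
            (inner ℝ (h (e a) (e b)) (h (e a) (e b)) : ℝ) ∧
          ∀ a b : Fin n, ∃ c : ℝ, h (e a) (e b) = c • H)) := by
  have key := forall_symm_bilin_eq_sum_iff H fun p : Fin n × Fin n => h (e p.1) (e p.2)
  simp only [Fintype.sum_prod_type, Prod.forall] at key
  have h_eq_zero : h = 0 ↔ (∀ a b, h (e a) (e b) = 0) ∧ H = 0 := by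
    constructor
    · rintro rfl
      simp [hH]
    · rintro ⟨hab, -⟩
      exact LinearMap.ext_basis e.toBasis e.toBasis fun a b => by simpa using hab a b
  rw [key, h_eq_zero]

/-- Characterization of `Φ_h = 0` in the positive-definite case: for a symmetric bilinear
map `h : V × V → W` with mean curvature vector `H = Σₐ h(eₐ, eₐ)`, the identity
`B(H,H) = Σ_{a,b} B(h(eₐ,e_b), h(eₐ,e_b))` holds for every symmetric bilinear form `B` on `W`
iff either `h = 0`, or `H ≠ 0`, `⟨H,H⟩ = Σ_{a,b} ⟨h(eₐ,e_b), h(eₐ,e_b)⟩` and the image of `h`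
is spanned by `H`. -/
theorem Phi_h_eq_zero_iff
    {V W : Type*} [NormedAddCommGroup V] [InnerProductSpace ℝ V] [FiniteDimensional ℝ V]
    [NormedAddCommGroup W] [InnerProductSpace ℝ W] [FiniteDimensional ℝ W]
    {n : ℕ} (e : OrthonormalBasis (Fin n) ℝ V)
    (h : V →ₗ[ℝ] V →ₗ[ℝ] W)
    (hsym : ∀ X Y : V, h X Y = h Y X)
    (H : W) (hH : H = ∑ a : Fin n, h (e a) (e a)) :
    (∀ B : W →ₗ[ℝ] W →ₗ[ℝ] ℝ, (∀ x y : W, B x y = B y x) →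
        B H H = ∑ a : Fin n, ∑ b : Fin n, B (h (e a) (e b)) (h (e a) (e b))) ↔
      (h = 0 ∨
        (H ≠ 0 ∧
          (inner ℝ H H : ℝ) = ∑ a : Fin n, ∑ b : Fin n,
            (inner ℝ (h (e a) (e b)) (h (e a) (e b)) : ℝ) ∧
          ∀ a b : Fin n, ∃ c : ℝ, h (e a) (e b) = c • H)) :=
  Phi_h_eq_zero_iff_general e h H hH
end

section
/- Let n > 0 and C be real numbers, let P, τ, y : ℝ → ℝ be functions with P differentiable and P(t) > 0 for all t, and y differentiable, and let u : ℝ → ℝ be a positive differentiable function satisfying u'(t) = −2·√(P(t))·y(t)·u(t) for all t ∈ ℝ. Then u' is differentiable, and for every t ∈ ℝ the equation u''(t) − u'(t)²/u(t) − u'(t)·( P'(t)/(2·P(t)) + τ(t)·√(P(t)) ) + (2C/n)·P(t)·u(t) = 0 holds if and only if y'(t) = τ(t)·√(P(t))·y(t) + (C/n)·√(P(t)). -/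
/-!
If `u' = k u` then `u'' - u'²/u = k' u`: the logarithmic derivative of `u` is `k`, and the
second-order operator only sees its derivative. With `k = -2 √P y` and `(√P)' = √P · P'/(2P)`,
the whole Euler–Lagrange expression factors as `-2 √P u (y' - τ √P y - (C/n) √P)`, and the
prefactor never vanishes because `P` and `u` are positive.
-/

open Real

theorem hasDerivAt_deriv_of_deriv_eq_mul {k u : ℝ → ℝ} {k' t : ℝ} (hk : HasDerivAt k k' t)
    (hu : DifferentiableAt ℝ u t) (hku : deriv u = k * u) :
    HasDerivAt (deriv u) (k' * u t + k t * (k t * u t)) t := by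
  have hu' : HasDerivAt u (k t * u t) t := hu.hasDerivAt.congr_deriv (congrFun hku t)
  rw [hku]
  exact hk.mul hu'

theorem deriv_deriv_sub_sq_div_of_deriv_eq_mul {k u : ℝ → ℝ} {k' t : ℝ} (hk : HasDerivAt k k' t)
    (hu : DifferentiableAt ℝ u t) (hku : deriv u = k * u) :
    deriv (deriv u) t - deriv u t ^ 2 / u t = k' * u t := by
  rw [(hasDerivAt_deriv_of_deriv_eq_mul hk hu hku).deriv, congrFun hku t, Pi.mul_apply, mul_pow,
    sq (u t), mul_div_assoc, mul_self_div_self]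
  ring

theorem biregular_second_order_iff_first_order_general
    (n C : ℝ) (P τ y u : ℝ → ℝ)
    (hP : Differentiable ℝ P) (hPpos : ∀ t : ℝ, 0 < P t)
    (hy : Differentiable ℝ y)
    (hu : Differentiable ℝ u) (hupos : ∀ t : ℝ, 0 < u t)
    (huode : ∀ t : ℝ, deriv u t = -2 * Real.sqrt (P t) * y t * u t) :
    Differentiable ℝ (deriv u) ∧
    ∀ t : ℝ,
      (deriv (deriv u) t - (deriv u t) ^ 2 / u t
          - deriv u t * (deriv P t / (2 * P t) + τ t * Real.sqrt (P t))
          + (2 * C / n) * P t * u t = 0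
        ↔ deriv y t = τ t * Real.sqrt (P t) * y t + (C / n) * Real.sqrt (P t)) := by
  have hk : ∀ t, HasDerivAt (fun t => -2 * √(P t) * y t)
      (-2 * (deriv P t / (2 * √(P t))) * y t + -2 * √(P t) * deriv y t) t := fun t =>
    (((hP t).hasDerivAt.sqrt (hPpos t).ne').const_mul (-2)).mul (hy t).hasDerivAt
  have hku : deriv u = (fun t => -2 * √(P t) * y t) * u := funext huode
  refine ⟨fun t => (hasDerivAt_deriv_of_deriv_eq_mul (hk t) (hu t) hku).differentiableAt,
    fun t => ?_⟩
  rw [deriv_deriv_sub_sq_div_of_deriv_eq_mul (hk t) (hu t) hku, huode t]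
  have hs : 0 < √(P t) := sqrt_pos.2 (hPpos t)
  have hPs : P t = √(P t) ^ 2 := (sq_sqrt (hPpos t).le).symm
  have hfactor : (-2 * (deriv P t / (2 * √(P t))) * y t + -2 * √(P t) * deriv y t) * u t
        - -2 * √(P t) * y t * u t * (deriv P t / (2 * P t) + τ t * √(P t))
        + 2 * C / n * P t * u t
      = -2 * √(P t) * u t * (deriv y t - (τ t * √(P t) * y t + C / n * √(P t))) := by
    generalize √(P t) = s at hs hPs ⊢
    rw [hPs]
    field_simp
    ring
  rw [hfactor, mul_eq_zero, sub_eq_zero,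
    or_iff_right (mul_ne_zero (mul_ne_zero (by norm_num) hs.ne') (hupos t).ne')]

/-- In biregular foliated coordinates with `|g₀₀| = P`, a metric component
`u = g_{ii}` of the form `u' = -2 √P · y · u` satisfies the second-order
Euler–Lagrange equation
`u'' - u'²/u - u'·(P'/(2P) + τ√P) + (2C/n)·P·u = 0`
exactly when the principal curvature `y` solves the linear ODE
`y' = τ√P·y + (C/n)√P`. -/
theorem biregular_second_order_iff_first_order
    (n C : ℝ) (hn : 0 < n) (P τ y u : ℝ → ℝ)
    (hP : Differentiable ℝ P) (hPpos : ∀ t : ℝ, 0 < P t)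
    (hy : Differentiable ℝ y)
    (hu : Differentiable ℝ u) (hupos : ∀ t : ℝ, 0 < u t)
    (huode : ∀ t : ℝ, deriv u t = -2 * Real.sqrt (P t) * y t * u t) :
    Differentiable ℝ (deriv u) ∧
    ∀ t : ℝ,
      (deriv (deriv u) t - (deriv u t) ^ 2 / u t
          - deriv u t * (deriv P t / (2 * P t) + τ t * Real.sqrt (P t))
          + (2 * C / n) * P t * u t = 0
        ↔ deriv y t = τ t * Real.sqrt (P t) * y t + (C / n) * Real.sqrt (P t)) :=
  biregular_second_order_iff_first_order_general n C P τ y u hP hPpos hy hu hupos huode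
end
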